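/- arXiv:1502.06359 — 3 statements merged into one kernel-verified Lean document; each statement's English description precedes it below -/
import Mathlib

section
/- Let n ≥ 3 be odd. For every vector z : Bool^{n-2} and all Boolean values x, y, w, the associativity identity holds: M_n(z₁,…,z_{n-2}, y, M_n(z₁,…,z_{n-2}, x, w)) = M_n(z₁,…,z_{n-2}, x, M_n(z₁,…,z_{n-2}, y, w)). (Axiom Ω_n.A, Associativity, proved sound over the Booleans.) -/
/-- The `n`-ary majority function on Booleans: outputs `true` iff at least
`⌈n/2⌉ = (n+1)/2` of the `n` inputs are `true`. -/
def maj (n : ℕ) (x : Fin n → Bool) : Bool :=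
  decide ((n + 1) / 2 ≤ (Finset.univ.filter fun i => x i = true).card)

/-!
Once the shared inputs `z` are fixed, with `c` of them true, `M_n(z, a, b)` is the threshold
function `c + a + b ≥ t` of the two remaining inputs. Depending on `t - c`, such a function is
constantly `true`, `a ∨ b`, `a ∧ b`, or constantly `false`; each of these binary operations is
associative and commutative, hence left-commutative, which is the claimed identity.
-/

lemma card_filter_snoc_eq_true {n : ℕ} (v : Fin n → Bool) (b : Bool) :
    (Finset.univ.filter fun i => (Fin.snoc v b : Fin (n + 1) → Bool) i = true).card
      = (Finset.univ.filter fun i => v i = true).card + b.toNat := by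
  rw [Finset.card_filter, Finset.card_filter, Fin.sum_univ_castSucc]
  cases b <;> simp

lemma maj_snoc_snoc {m : ℕ} (z : Fin m → Bool) (a b : Bool) :
    maj (m + 2) (Fin.snoc (Fin.snoc z a) b)
      = decide ((m + 3) / 2 ≤ (Finset.univ.filter fun i => z i = true).card + a.toNat + b.toNat) := by
  rw [maj, card_filter_snoc_eq_true, card_filter_snoc_eq_true]

lemma decide_le_add_toNat_add_toNat (t c : ℕ) (a b : Bool) :
    decide (t ≤ c + a.toNat + b.toNat) =
      if t ≤ c then true else if t ≤ c + 1 then a || b else if t ≤ c + 2 then a && b else false := by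
  split_ifs <;> cases a <;> cases b <;> simp <;> omega

lemma decide_le_add_toNat_add_toNat_left_comm (t c : ℕ) (x y w : Bool) :
    decide (t ≤ c + y.toNat + (decide (t ≤ c + x.toNat + w.toNat)).toNat) =
      decide (t ≤ c + x.toNat + (decide (t ≤ c + y.toNat + w.toNat)).toNat) := by
  simp only [decide_le_add_toNat_add_toNat]
  split_ifs <;> simp [Bool.or_left_comm, Bool.and_left_comm]

theorem maj_assoc_general (m : ℕ)
    (z : Fin m → Bool) (x y w : Bool) :
    maj (m + 2) (Fin.snoc (Fin.snoc z y) (maj (m + 2) (Fin.snoc (Fin.snoc z x) w))) =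
      maj (m + 2) (Fin.snoc (Fin.snoc z x) (maj (m + 2) (Fin.snoc (Fin.snoc z y) w))) := by
  simp only [maj_snoc_snoc]
  exact decide_le_add_toNat_add_toNat_left_comm _ _ x y w

/-- Ω_n.A (Associativity): swapping x and y between two cascaded majorities
sharing the n-2 variables z does not change the result. -/
theorem maj_assoc (m : ℕ) (hn : 3 ≤ m + 2) (hodd : Odd (m + 2))
    (z : Fin m → Bool) (x y w : Bool) :
    maj (m + 2) (Fin.snoc (Fin.snoc z y) (maj (m + 2) (Fin.snoc (Fin.snoc z x) w))) =
      maj (m + 2) (Fin.snoc (Fin.snoc z x) (maj (m + 2) (Fin.snoc (Fin.snoc z y) w))) :=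
  maj_assoc_general m z x y w
end

section
/- Let n ≥ 3 be odd. For every x : Bool^{n-1} and every y : Bool^n, the (full) distributivity identity holds: M_n(x₁,…,x_{n-1}, M_n(y₁,…,y_n)) = M_n(M_n(x₁,…,x_{n-1},y₁), M_n(x₁,…,x_{n-1},y₂), …, M_n(x₁,…,x_{n-1},y_{n-1}), y_n). (Axiom Ω_n.D, Distributivity, proved sound over the Booleans.) -/
/-!
With `x` fixed and `t = (m + 2) / 2` the threshold of `maj (m + 1)`, the map `b ↦ maj (m + 1) (x, b)`
only depends on how the number `S` of `true` entries of `x` compares with `t`: it is constantly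
`true` if `S ≥ t`, constantly `false` if `S + 1 < t`, and the identity if `S + 1 = t`. In the two
constant cases both sides of the identity are that constant; in the third every inner majority
returns `yᵢ`, so both sides are `maj (m + 1) y`.
-/

open Finset

def trueCount {m : ℕ} (x : Fin m → Bool) : ℕ :=
  #{i | x i = true}

lemma trueCount_le {m : ℕ} (x : Fin m → Bool) : trueCount x ≤ m :=
  (card_filter_le _ _).trans_eq (card_fin m)

@[simp]
lemma trueCount_const_true (m : ℕ) : trueCount (fun _ : Fin m => true) = m := by
  simp [trueCount]

@[simp]
lemma trueCount_const_false (m : ℕ) : trueCount (fun _ : Fin m => false) = 0 := by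
  simp [trueCount]

lemma trueCount_snoc {m : ℕ} (x : Fin m → Bool) (b : Bool) :
    trueCount (Fin.snoc x b : Fin (m + 1) → Bool) = trueCount x + b.toNat := by
  simp only [trueCount, card_filter, Fin.sum_univ_castSucc, Fin.snoc_castSucc, Fin.snoc_last]
  cases b <;> rfl

lemma maj_snoc {m : ℕ} (x : Fin m → Bool) (b : Bool) :
    maj (m + 1) (Fin.snoc x b) = decide ((m + 2) / 2 ≤ trueCount x + b.toNat) := by
  rw [maj, ← trueCount, trueCount_snoc]

section snoc

variable {m : ℕ} {x : Fin m → Bool}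

lemma maj_snoc_of_le (h : (m + 2) / 2 ≤ trueCount x) (b : Bool) :
    maj (m + 1) (Fin.snoc x b) = true := by
  rw [maj_snoc, decide_eq_true_eq]
  omega

lemma maj_snoc_of_lt (h : trueCount x + 1 < (m + 2) / 2) (b : Bool) :
    maj (m + 1) (Fin.snoc x b) = false := by
  rw [maj_snoc, decide_eq_false_iff_not]
  have := b.toNat_le
  omega

lemma maj_snoc_of_eq (h : trueCount x + 1 = (m + 2) / 2) (b : Bool) :
    maj (m + 1) (Fin.snoc x b) = b := by
  rw [maj_snoc]
  cases b
  · simp only [Bool.toNat_false, decide_eq_false_iff_not]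
    omega
  · simp only [Bool.toNat_true, decide_eq_true_eq]
    omega

end snoc

theorem maj_distrib_full_general (m : ℕ)
    (x : Fin m → Bool) (y : Fin (m + 1) → Bool) :
    maj (m + 1) (Fin.snoc x (maj (m + 1) y)) =
      maj (m + 1)
        (Fin.snoc (fun i : Fin m => maj (m + 1) (Fin.snoc x (y i.castSucc)))
          (y (Fin.last m))) := by
  rcases lt_trichotomy (trueCount x + 1) ((m + 2) / 2) with h | h | h
  · simp only [maj_snoc_of_lt h]
    refine (maj_snoc_of_lt ?_ _).symm
    rw [trueCount_const_false]
    omega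
  · simp only [maj_snoc_of_eq h]
    exact congrArg _ (Fin.snoc_init_self y).symm
  · have hle : (m + 2) / 2 ≤ trueCount x := by omega
    simp only [maj_snoc_of_le hle]
    refine (maj_snoc_of_le ?_ _).symm
    rw [trueCount_const_true]
    exact hle.trans (trueCount_le x)

/-- Ω_n.D (Distributivity, full form): distributing the outer majority over the
first n-1 inner variables, leaving the last one unchanged. -/
theorem maj_distrib_full (m : ℕ) (hn : 3 ≤ m + 1) (hodd : Odd (m + 1))
    (x : Fin m → Bool) (y : Fin (m + 1) → Bool) :
    maj (m + 1) (Fin.snoc x (maj (m + 1) y)) =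
      maj (m + 1)
        (Fin.snoc (fun i : Fin m => maj (m + 1) (Fin.snoc x (y i.castSucc)))
          (y (Fin.last m))) :=
  maj_distrib_full_general m x y
end

section
/- Let n ≥ 3 be odd and let k be an integer with ⌈n/2⌉ ≤ k ≤ n-1. For every x : Bool^{n-1} and every y : Bool^n, the partial distributivity identity holds: M_n(x₁,…,x_{n-1}, M_n(y₁,…,y_n)) = M_n(M_n(x₁,…,x_{n-1},y₁), …, M_n(x₁,…,x_{n-1},y_k), y_{k+1}, …, y_n), i.e., substituting the inner majority M_n(x₁,…,x_{n-1},·) into any k ≥ ⌈n/2⌉ of the n inner variables y₁,…,y_n and leaving the remaining n-k variables unchanged yields the same Boolean function. (Axiom Ω_n.D, Distributivity, in its general form, proved sound over the Booleans.) -/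
open Finset

lemma maj_mono (n : ℕ) : Monotone (maj n) := by
  intro x y hxy
  refine Bool.le_iff_imp.2 fun hx => decide_eq_true ((of_decide_eq_true hx).trans ?_)
  refine card_le_card fun i hi => ?_
  simp only [mem_filter, mem_univ, true_and] at hi ⊢
  exact Bool.le_iff_imp.1 (hxy i) hi

lemma Fin.monotone_snoc {α : Type*} [Preorder α] {m : ℕ} (x : Fin m → α) :
    Monotone (Fin.snoc (α := fun _ => α) x) := by
  intro a b hab i
  cases i using Fin.lastCases <;> simp [hab]

lemma maj_eq_true_of_prefix {n k : ℕ} (hk : (n + 1) / 2 ≤ k) {z : Fin n → Bool}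
    (hz : ∀ i : Fin n, (i : ℕ) < k → z i = true) : maj n z = true := by
  refine decide_eq_true ?_
  calc (n + 1) / 2 ≤ min n k := by omega
    _ = #{i : Fin n | (i : ℕ) < k} := Fin.card_filter_val_lt.symm
    _ ≤ #{i | z i = true} := card_le_card fun i hi => by
      simp only [mem_filter, mem_univ, true_and] at hi ⊢
      exact hz i hi

lemma maj_eq_false_of_prefix {n k : ℕ} (hn : Odd n) (hk : (n + 1) / 2 ≤ k) {z : Fin n → Bool}
    (hz : ∀ i : Fin n, (i : ℕ) < k → z i = false) : maj n z = false := by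
  have hsuffix : #{i : Fin n | ¬(i : ℕ) < k} = n - min n k := by
    have := card_filter_add_card_filter_not (s := univ) (p := fun i : Fin n => (i : ℕ) < k)
    rw [Fin.card_filter_val_lt, card_univ, Fintype.card_fin] at this
    omega
  have hcard : #{i | z i = true} ≤ n - min n k := hsuffix ▸ card_le_card fun i hi => by
    simp only [mem_filter, mem_univ, true_and] at hi ⊢
    exact fun hik => by simp [hz i hik] at hi
  obtain ⟨a, rfl⟩ := hn
  exact decide_eq_false (by omega)

theorem Monotone.apply_maj_eq_maj_ite {n k : ℕ} (hn : Odd n) (hk : (n + 1) / 2 ≤ k)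
    {f : Bool → Bool} (hf : Monotone f) (y : Fin n → Bool) :
    f (maj n y) = maj n (fun i => if (i : ℕ) < k then f (y i) else y i) := by
  cases hfalse : f false <;> cases htrue : f true
  · rw [show f (maj n y) = false by cases maj n y <;> assumption]
    exact (maj_eq_false_of_prefix hn hk fun i hi => by
      simp only [if_pos hi]; cases y i <;> assumption).symm
  · have hid : f = id := by funext b; cases b <;> assumption
    simp [hid]
  · exact absurd (hf (Bool.false_le true)) (by simp [hfalse, htrue])
  · rw [show f (maj n y) = true by cases maj n y <;> assumption]
    exact (maj_eq_true_of_prefix hk fun i hi => by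
      simp only [if_pos hi]; cases y i <;> assumption).symm

theorem maj_distrib_partial_general (m : ℕ) (hodd : Odd (m + 1))
    (k : ℕ) (hk1 : (m + 1 + 1) / 2 ≤ k)
    (x : Fin m → Bool) (y : Fin (m + 1) → Bool) :
    maj (m + 1) (Fin.snoc x (maj (m + 1) y)) =
      maj (m + 1)
        (fun i => if (i : ℕ) < k then maj (m + 1) (Fin.snoc x (y i)) else y i) :=
  ((maj_mono (m + 1)).comp (Fin.monotone_snoc x)).apply_maj_eq_maj_ite hodd hk1 y

/-- Ω_n.D (Distributivity, general form): substituting the inner majority into any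
k ≥ ⌈n/2⌉ of the n inner variables (k ≤ n-1), leaving the rest unchanged, yields
the same function. -/
theorem maj_distrib_partial (m : ℕ) (hn : 3 ≤ m + 1) (hodd : Odd (m + 1))
    (k : ℕ) (hk1 : (m + 1 + 1) / 2 ≤ k) (hk2 : k ≤ m)
    (x : Fin m → Bool) (y : Fin (m + 1) → Bool) :
    maj (m + 1) (Fin.snoc x (maj (m + 1) y)) =
      maj (m + 1)
        (fun i => if (i : ℕ) < k then maj (m + 1) (Fin.snoc x (y i)) else y i) :=
  maj_distrib_partial_general m hodd k hk1 x y
end
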